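/- K admits no nontrivial computable lower bound: if X ⊆ {0,1}* is a computable (decidable) set and f : X → ℕ is a computable function such that f(x) ≤ K(x) for all x ∈ X, then f is bounded. Consequently, no restriction of K to an infinite computable set is computable. -/

import Mathlib

/-- Kolmogorov complexity of the binary string `x` relative to the partial function
`A : {0,1}* →. {0,1}*`, valued in `ℕ∞` (`= ⊤` when `x` is not in the range of `A`). -/
noncomputable def Kc (A : List Bool →. List Bool) (x : List Bool) : ℕ∞ :=
  sInf {n : ℕ∞ | ∃ p : List Bool, x ∈ A p ∧ (p.length : ℕ∞) = n}

/-- `U` is optimal if it is partial computable and `K_U` is smallest, up to an additive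
constant, among the `K_A` for partial computable `A`. -/
def OptimalU (U : List Bool →. List Bool) : Prop :=
  Partrec U ∧ ∀ A : List Bool →. List Bool, Partrec A →
    ∃ c : ℕ, ∀ x : List Bool, Kc U x ≤ Kc A x + (c : ℕ∞)

/- ### Auxiliary material -/

/-- Decode a list of booleans back into a natural number (inverse of `Nat.bits`). -/
def dnum : List Bool → ℕ := fun l => l.foldr (fun b n => Nat.bit b n) 0

lemma dnum_bits (n : ℕ) : dnum (Nat.bits n) = n := by
  induction n using Nat.binaryRec' with
  | zero => simp [dnum, Nat.zero_bits]
  | bit b n h ih =>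
      rw [Nat.bits_append_bit _ _ h]
      show Nat.bit b (dnum n.bits) = Nat.bit b n
      rw [ih]

lemma dnum_primrec : Primrec dnum := by
  have hbit : Primrec₂ (fun (_ : List Bool) (p : Bool × ℕ) => Nat.bit p.1 p.2) := by
    have : Primrec (fun p : List Bool × (Bool × ℕ) => Nat.bit p.2.1 p.2.2) := by
      have h2n : Primrec (fun p : List Bool × (Bool × ℕ) => 2 * p.2.2) :=
        Primrec.nat_mul.comp (Primrec.const 2) (Primrec.snd.comp Primrec.snd)
      have hc : Primrec (fun p : List Bool × (Bool × ℕ) => cond p.2.1 1 0) :=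
        Primrec.cond (Primrec.fst.comp Primrec.snd) (Primrec.const 1) (Primrec.const 0)
      have := Primrec.nat_add.comp h2n hc
      refine this.of_eq fun p => ?_
      rcases p with ⟨_, b, n⟩
      cases b <;> simp [Nat.bit]
    exact this
  exact (Primrec.list_foldr Primrec.id (Primrec.const 0) hbit).of_eq fun l => rfl

lemma Kc_le {A : List Bool →. List Bool} {x p : List Bool} (h : x ∈ A p) :
    Kc A x ≤ (p.length : ℕ∞) := sInf_le ⟨p, h, rfl⟩

lemma Kc_le_iff {A : List Bool →. List Bool} {x : List Bool} {m : ℕ} :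
    Kc A x ≤ (m : ℕ∞) ↔ ∃ p : List Bool, x ∈ A p ∧ p.length ≤ m := by
  constructor
  · intro h
    have hne : ∃ k : ℕ, ∃ p : List Bool, x ∈ A p ∧ p.length = k := by
      by_contra hc
      push_neg at hc
      have : {n : ℕ∞ | ∃ p : List Bool, x ∈ A p ∧ (p.length : ℕ∞) = n} = ∅ := by
        ext n; simp only [Set.mem_setOf_eq, Set.mem_empty_iff_false, iff_false]
        rintro ⟨p, hp, rfl⟩
        exact hc p.length p hp rfl
      rw [Kc, this, sInf_empty] at h
      exact (not_le.2 (WithTop.coe_lt_top m)) h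
    classical
    let k₀ := Nat.find hne
    have hk₀ : ∃ p : List Bool, x ∈ A p ∧ p.length = k₀ := Nat.find_spec hne
    have hle : (k₀ : ℕ∞) ≤ Kc A x := by
      apply le_sInf
      rintro n ⟨p, hp, rfl⟩
      exact_mod_cast Nat.find_min' hne ⟨p, hp, rfl⟩
    obtain ⟨p, hp, hpl⟩ := hk₀
    exact ⟨p, hp, hpl ▸ (by exact_mod_cast hle.trans h)⟩
  · rintro ⟨p, hp, hpl⟩
    exact (Kc_le hp).trans (by exact_mod_cast hpl)

lemma Kc_finite (A : List Bool →. List Bool) (b : ℕ) :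
    {x : List Bool | Kc A x ≤ (b : ℕ∞)}.Finite := by
  have hsub : {x : List Bool | Kc A x ≤ (b : ℕ∞)} ⊆
      ⋃ p ∈ {p : List Bool | p.length ≤ b}, {x | x ∈ A p} := by
    intro x hx
    obtain ⟨p, hp, hpl⟩ := Kc_le_iff.1 hx
    exact Set.mem_biUnion hpl hp
  refine Set.Finite.subset (Set.Finite.biUnion (List.finite_length_le Bool b) ?_) hsub
  intro p _
  exact Set.Subsingleton.finite fun x hx y hy => Part.mem_unique hx hy

lemma toNat_le_of_le {a : ℕ∞} {m : ℕ} (h : a ≤ (m : ℕ∞)) : a.toNat ≤ m := by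
  obtain ⟨k, rfl, hk⟩ := WithTop.le_coe_iff.1 h
  exact hk

lemma Kc_id (x : List Bool) : Kc (fun y => Part.some y) x = (x.length : ℕ∞) := by
  refine le_antisymm (Kc_le (Part.mem_some x)) (le_sInf ?_)
  rintro n ⟨p, hp, rfl⟩
  rw [Part.mem_some_iff] at hp
  subst hp
  exact le_rfl

lemma Kc_ne_top {U : List Bool →. List Bool} (hU : OptimalU U) :
    ∃ c₀ : ℕ, ∀ x : List Bool, Kc U x ≤ ((x.length + c₀ : ℕ) : ℕ∞) := by
  obtain ⟨c₀, hc₀⟩ := hU.2 (fun y => Part.some y) (Computable.id.partrec)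
  refine ⟨c₀, fun x => ?_⟩
  have := hc₀ x
  rw [Kc_id] at this
  simpa [Nat.cast_add] using this

/-- `K` admits no nontrivial computable lower bound: any computable `f` with
`f(x) ≤ K(x)` on a computable (decidable) set `X` is bounded on `X`.
Consequently, no restriction of `K` to an infinite computable set is computable. -/
theorem K_no_computable_lower_bound (U : List Bool →. List Bool) (hU : OptimalU U) :
    (∀ X : Set (List Bool), ComputablePred (· ∈ X) →
      ∀ f : List Bool → ℕ, Computable f →
        (∀ x ∈ X, f x ≤ (Kc U x).toNat) →
        ∃ b : ℕ, ∀ x ∈ X, f x ≤ b) ∧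
    (∀ X : Set (List Bool), X.Infinite → ComputablePred (· ∈ X) →
      ∀ f : List Bool → ℕ, Computable f →
        ¬ (∀ x ∈ X, f x = (Kc U x).toNat)) := by
  have part1 : ∀ X : Set (List Bool), ComputablePred (· ∈ X) →
      ∀ f : List Bool → ℕ, Computable f →
        (∀ x ∈ X, f x ≤ (Kc U x).toNat) →
        ∃ b : ℕ, ∀ x ∈ X, f x ≤ b := by
    intro X hX f hf hfK
    by_contra hcon
    push_neg at hcon
    -- hcon : ∀ b, ∃ x ∈ X, b < f x
    obtain ⟨inst, hχ⟩ := hX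
    set χ : List Bool → Bool := fun a => @decide (a ∈ X) (inst a) with hχdef
    have hχ_iff : ∀ a, χ a = true ↔ a ∈ X := fun a => @decide_eq_true_iff _ (inst a)
    -- the search predicate
    set q : ℕ → ℕ → Bool := fun n m =>
      ((Encodable.decode (α := List Bool) m).map
        (fun x => cond (χ x) (decide (n < f x)) false)).getD false with hqdef
    have hq : Computable₂ q := by
      have hinner : Computable₂ (fun (p : ℕ × ℕ) (x : List Bool) =>
          cond (χ x) (decide (p.1 < f x)) false) := by
        have hχc : Computable χ := hχ
        have hlt : Computable (fun z : (ℕ × ℕ) × List Bool => decide (z.1.1 < f z.2)) :=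
          (Primrec.nat_lt.decide.to_comp.comp
            (Computable.fst.comp Computable.fst) (hf.comp Computable.snd))
        exact Computable.cond (hχc.comp Computable.snd) hlt (Computable.const false)
      exact Computable₂.mk <| Computable.option_getD
        (Computable.option_map (Computable.decode.comp Computable.snd) hinner)
        (Computable.const false)
    -- the searcher
    set g : ℕ →. ℕ := fun n => Nat.rfind (fun m => Part.some (q n m)) with hgdef
    have hg : Partrec g := Partrec.rfind hq.partrec₂
    set G : ℕ →. List Bool :=
      fun n => (g n).bind (fun m => Part.ofOption (Encodable.decode m)) with hGdef
    have hG : Partrec G :=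
      hg.bind ((Computable.ofOption (Computable.decode.comp Computable.snd)).to₂)
    set A : List Bool →. List Bool := fun p => G (dnum p) with hAdef
    have hA : Partrec A := hG.comp dnum_primrec.to_comp
    obtain ⟨c, hc⟩ := hU.2 A hA
    have key : ∀ n : ℕ, n < Nat.size n + c := by
      intro n
      obtain ⟨x, hxX, hxf⟩ := hcon n
      have hqx : q n (Encodable.encode x) = true := by
        simp only [hqdef, Encodable.encodek, Option.map_some, Option.getD_some]
        rw [(hχ_iff x).2 hxX]
        simpa using hxf
      obtain ⟨m₀, hm₀, -⟩ := Nat.rfind_min' (p := q n) hqx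
      have hm₀' : m₀ ∈ g n := hm₀
      have hqm₀ : q n m₀ = true := by
        have := Nat.rfind_spec hm₀
        simpa using this
      -- decode m₀
      obtain ⟨y, hy⟩ : ∃ y, Encodable.decode (α := List Bool) m₀ = some y := by
        rcases hdec : Encodable.decode (α := List Bool) m₀ with _ | y
        · rw [hqdef] at hqm₀; simp [hdec] at hqm₀
        · exact ⟨y, rfl⟩
      have hyX : y ∈ X ∧ n < f y := by
        rw [hqdef] at hqm₀
        simp only [hy, Option.map_some, Option.getD_some] at hqm₀
        rcases hχy : χ y with _ | _
        · rw [hχy] at hqm₀; simp at hqm₀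
        · rw [hχy] at hqm₀
          simp only [cond_true, decide_eq_true_eq] at hqm₀
          exact ⟨(hχ_iff y).1 hχy, hqm₀⟩
      have hyG : y ∈ G n := by
        rw [hGdef]
        refine Part.mem_bind_iff.2 ⟨m₀, hm₀', ?_⟩
        simp [hy]
      have hyA : y ∈ A (Nat.bits n) := by
        rw [hAdef]
        simpa [dnum_bits] using hyG
      have h1 : Kc A y ≤ (Nat.size n : ℕ∞) := by
        have := Kc_le hyA
        rwa [Nat.size_eq_bits_len] at this
      have h2 : Kc U y ≤ ((Nat.size n + c : ℕ) : ℕ∞) := by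
        calc Kc U y ≤ Kc A y + (c : ℕ∞) := hc y
        _ ≤ (Nat.size n : ℕ∞) + (c : ℕ∞) := by exact add_le_add_left h1 _
        _ = ((Nat.size n + c : ℕ) : ℕ∞) := by push_cast; ring
      have h3 : (Kc U y).toNat ≤ Nat.size n + c := toNat_le_of_le h2
      have h4 : n < f y := hyX.2
      have h5 : f y ≤ (Kc U y).toNat := hfK y hyX.1
      omega
    -- contradiction for n = 2^(c+2)
    have hbig := key (2 ^ (c + 2))
    rw [Nat.size_pow] at hbig
    have hpow : c < 2 ^ c := Nat.lt_two_pow_self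
    have : 2 ^ (c + 2) = 4 * 2 ^ c := by ring
    omega
  refine ⟨part1, ?_⟩
  intro X hXinf hX f hf hfK
  have hfle : ∀ x ∈ X, f x ≤ (Kc U x).toNat := fun x hx => (hfK x hx).le
  obtain ⟨b, hb⟩ := part1 X hX f hf hfle
  obtain ⟨x, hx⟩ := (hXinf.diff (Kc_finite U b)).nonempty
  have hxX : x ∈ X := hx.1
  have hxK : ¬ Kc U x ≤ (b : ℕ∞) := hx.2
  obtain ⟨c₀, hc₀⟩ := Kc_ne_top hU
  have hne : Kc U x ≠ ⊤ := ne_top_of_le_ne_top (WithTop.coe_ne_top) (hc₀ x)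
  have hk : ((Kc U x).toNat : ℕ∞) = Kc U x := ENat.coe_toNat hne
  rw [← hk] at hxK
  have hbk : b < (Kc U x).toNat := by exact_mod_cast not_le.1 hxK
  have := hb x hxX
  rw [hfK x hxX] at this
  omega
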